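/- Let K be a field of characteristic 0, A a finite-dimensional semisimple K-algebra with simple factors A₁,...,A_r and corresponding central idempotents e₁,...,e_r, and t : A → K a K-linear trace functional (t(fg)=t(gf)) with associated central element μ = Σ μᵢeᵢ (i.e., t(f) = Trd_A(μf)) where each μᵢ ∈ ℤ ⊆ Z(Aᵢ). Then for any f ∈ A, exp(Σ_{n≥1} t(fⁿ) tⁿ/n) = ∏ᵢ Nrd_{Aᵢ}(eᵢ − eᵢ f t)^{−μᵢ}, which lies in K(t). -/

import Mathlib

/-!
For a single matrix `M`, the series `exp (∑ tr (Mᵏ) Xᵏ / k)` is inverse to the reverse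
characteristic polynomial `det (1 - X M)`: both have constant term 1, and their logarithmic
derivatives are opposite, because by Jacobi's formula the logarithmic derivative of
`det (1 - X M)` is `-tr (M (1 - X M)⁻¹) = -∑ tr (Mᵏ⁺¹) Xᵏ`. Through the `ρᵢ`, the power sums
`t (fᵏ)` are the integer combination `∑ μᵢ tr ((ρᵢ f)ᵏ)`, and `exp` turns this combination into
a product of integer powers of the inverses of the reverse characteristic polynomials.
-/

/-- The exponential `exp f = ∑ fᵏ/k!` of a power series `f` (with zero constant term),
over a field of characteristic 0. -/
noncomputable def psExp {K : Type*} [Field K] (f : PowerSeries K) : PowerSeries K :=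
  PowerSeries.mk fun n =>
    ∑ k ∈ Finset.range (n + 1), PowerSeries.coeff n (f ^ k) / (Nat.factorial k : K)

open PowerSeries

section PsExp

variable {F : Type*} [Field F] {S T P : F⟦X⟧}

theorem constantCoeff_psExp (S : F⟦X⟧) : constantCoeff (psExp S) = 1 := by
  rw [← coeff_zero_eq_constantCoeff_apply]
  simp [psExp]

theorem map_psExp {L : Type*} [Field L] (φ : F →+* L) (S : F⟦X⟧) :
    map φ (psExp S) = psExp (map φ S) := by
  ext n
  simp only [psExp, coeff_map, coeff_mk, map_sum, map_div₀, map_natCast, ← map_pow]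

variable [CharZero F]

theorem psExp_eq_subst (hS : constantCoeff S = 0) : psExp S = (exp F).subst S := by
  ext n
  rw [coeff_subst' (HasSubst.of_constantCoeff_zero' hS), psExp, coeff_mk,
    finsum_eq_sum_of_support_subset (s := Finset.range (n + 1))]
  · refine Finset.sum_congr rfl fun k _ => ?_
    simp [coeff_exp, div_eq_inv_mul]
  · intro k hk
    contrapose! hk
    have hnk : (n : ℕ∞) < k := by
      rw [Finset.coe_range, Set.mem_Iio, not_lt] at hk
      exact_mod_cast Nat.lt_of_succ_le hk
    simp [coeff_of_lt_order n (hnk.trans_le (le_order_pow_of_constantCoeff_eq_zero k hS))]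

theorem derivative_psExp (hS : constantCoeff S = 0) :
    d⁄dX F (psExp S) = psExp S * d⁄dX F S := by
  rw [psExp_eq_subst hS, derivative_subst (HasSubst.of_constantCoeff_zero' hS), derivative_exp]

theorem psExp_mul_eq_one_of_derivative (hS : constantCoeff S = 0) (hP₀ : constantCoeff P = 1)
    (hP : d⁄dX F P = -(P * d⁄dX F S)) : psExp S * P = 1 := by
  refine derivative.ext ?_ (by simp [constantCoeff_psExp, hP₀])
  rw [Derivation.leibniz, derivative_psExp hS, hP, Derivation.map_one_eq_zero, smul_eq_mul,
    smul_eq_mul]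
  ring

theorem psExp_mul_psExp_neg (hS : constantCoeff S = 0) : psExp S * psExp (-S) = 1 :=
  psExp_mul_eq_one_of_derivative hS (constantCoeff_psExp _) <| by
    rw [derivative_psExp (by simp [hS]), map_neg, mul_neg]

theorem psExp_add (hS : constantCoeff S = 0) (hT : constantCoeff T = 0) :
    psExp (S + T) = psExp S * psExp T := by
  refine left_inv_eq_right_inv (a := psExp (-S) * psExp (-T)) ?_ ?_
  · have hS' : constantCoeff (-S) = 0 := by simp [hS]
    have hT' : constantCoeff (-T) = 0 := by simp [hT]
    refine psExp_mul_eq_one_of_derivative (by simp [hS, hT]) (by simp [constantCoeff_psExp]) ?_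
    rw [Derivation.leibniz, derivative_psExp hS', derivative_psExp hT']
    simp only [map_neg, map_add, smul_eq_mul]
    ring
  · rw [mul_mul_mul_comm, mul_comm (psExp (-S)), mul_comm (psExp (-T)), psExp_mul_psExp_neg hS,
      psExp_mul_psExp_neg hT, one_mul]

theorem psExp_zero : psExp (0 : F⟦X⟧) = 1 := by
  simpa using psExp_mul_eq_one_of_derivative (S := (0 : F⟦X⟧)) (P := 1) (by simp) (by simp)
    (by simp)

theorem psExp_sum {ι : Type*} (s : Finset ι) {S : ι → F⟦X⟧}
    (hS : ∀ i ∈ s, constantCoeff (S i) = 0) : psExp (∑ i ∈ s, S i) = ∏ i ∈ s, psExp (S i) := by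
  classical
  induction s using Finset.induction with
  | empty => simpa using psExp_zero
  | insert a s ha ih =>
    rw [Finset.sum_insert ha, Finset.prod_insert ha, psExp_add (hS a (s.mem_insert_self a))
      (by simp_all [map_sum]), ih fun i hi => hS i (Finset.mem_insert_of_mem hi)]

theorem psExp_nsmul (hS : constantCoeff S = 0) (m : ℕ) : psExp (m • S) = psExp S ^ m := by
  simpa using psExp_sum (Finset.range m) (S := fun _ => S) fun _ _ => hS

theorem psExp_intCast_smul_mul_pow (hS : constantCoeff S = 0) (hP : psExp S * P = 1) (m : ℤ) :
    psExp ((m : F) • S) * P ^ m.toNat = P ^ (-m).toNat := by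
  have hneg : psExp (-S) = P :=
    left_inv_eq_right_inv (mul_comm (psExp S) _ ▸ psExp_mul_psExp_neg hS) hP
  rcases m with k | k
  · rw [Int.ofNat_eq_natCast, Int.cast_natCast, Nat.cast_smul_eq_nsmul, psExp_nsmul hS,
      Int.toNat_natCast, ← mul_pow, hP]
    simp
  · have hk : ((Int.negSucc k : ℤ) : F) • S = (k + 1) • -S := by
      rw [Int.cast_negSucc, neg_smul, ← smul_neg]
      norm_cast
    rw [hk, psExp_nsmul (by simp [hS]), hneg]
    simp

end PsExp

section LogSeries

variable {F : Type*} [Field F]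

noncomputable def logSeries (a : ℕ → F) : F⟦X⟧ :=
  mk fun k => if k = 0 then 0 else a k / k

theorem constantCoeff_logSeries (a : ℕ → F) : constantCoeff (logSeries a) = 0 := by
  simp [logSeries, ← coeff_zero_eq_constantCoeff_apply]

theorem map_logSeries {L : Type*} [Field L] (φ : F →+* L) (a : ℕ → F) :
    map φ (logSeries a) = logSeries (φ ∘ a) := by
  ext k
  simp [logSeries, apply_ite φ]

theorem logSeries_sum_mul {ι : Type*} (s : Finset ι) (c : ι → F) (a : ι → ℕ → F) :
    logSeries (fun k => ∑ i ∈ s, c i * a i k) = ∑ i ∈ s, c i • logSeries (a i) := by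
  ext k
  simp only [logSeries, coeff_mk, map_sum, map_smul, smul_eq_mul]
  split_ifs <;> simp [Finset.sum_div, mul_div_assoc]

theorem derivative_logSeries [CharZero F] (a : ℕ → F) :
    d⁄dX F (logSeries a) = mk fun k => a (k + 1) := by
  ext k
  simp [logSeries, coeff_derivative, Nat.cast_add_one_ne_zero]

end LogSeries

section Jacobi

variable {R S ι : Type*} [CommRing R] [CommRing S] [Algebra R S] [DecidableEq ι]

theorem Derivation.leibniz_prod (D : Derivation R S S) (s : Finset ι) (f : ι → S) :
    D (∏ i ∈ s, f i) = ∑ i ∈ s, (∏ j ∈ s.erase i, f j) * D (f i) := by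
  induction s using Finset.induction with
  | empty => simp
  | insert a s ha ih =>
    rw [Finset.prod_insert ha, Derivation.leibniz, smul_eq_mul, smul_eq_mul, ih,
      Finset.sum_insert ha, Finset.erase_insert ha, Finset.mul_sum, add_comm]
    congr 1
    refine Finset.sum_congr rfl fun i hi => ?_
    rw [Finset.erase_insert_of_ne (ne_of_mem_of_not_mem hi ha).symm,
      Finset.prod_insert fun h => ha (Finset.mem_of_mem_erase h)]
    ring

variable [Fintype ι]

theorem Derivation.map_det_eq_sum_det_updateCol (D : Derivation R S S) (B : Matrix ι ι S) :
    D B.det = ∑ j, (B.updateCol j fun i => D (B i j)).det := by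
  simp only [Matrix.det_apply, map_sum, Derivation.map_smul_of_tower, leibniz_prod]
  rw [Finset.sum_comm]
  refine Finset.sum_congr rfl fun σ _ => ?_
  rw [Finset.smul_sum]
  refine Finset.sum_congr rfl fun j _ => ?_
  rw [← Finset.mul_prod_erase _ _ (Finset.mem_univ j), Matrix.updateCol_self, mul_comm]
  congr 2
  exact Finset.prod_congr rfl fun i hi => by rw [Matrix.updateCol_ne (Finset.ne_of_mem_erase hi)]

theorem Derivation.map_det (D : Derivation R S S) (B : Matrix ι ι S) :
    D B.det = (B.adjugate * B.map D).trace := by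
  rw [map_det_eq_sum_det_updateCol, Matrix.trace]
  refine Finset.sum_congr rfl fun j _ => ?_
  rw [← Matrix.cramer_apply, Matrix.cramer_eq_adjugate_mulVec]
  rfl

end Jacobi

namespace Matrix

variable {R ι : Type*} [CommRing R] [Fintype ι] [DecidableEq ι]

noncomputable def geomSeries (M : Matrix ι ι R) : Matrix ι ι R⟦X⟧ :=
  of fun i j => mk fun k => (M ^ k) i j

theorem map_C_mul_geomSeries_apply (M : Matrix ι ι R) (i j : ι) :
    (M.map C * geomSeries M) i j = mk fun k => (M ^ (k + 1)) i j := by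
  ext k
  simp [geomSeries, mul_apply, coeff_C_mul, pow_succ']

theorem one_sub_X_smul_mul_geomSeries (M : Matrix ι ι R) :
    (1 - (X : R⟦X⟧) • M.map C) * geomSeries M = 1 := by
  ext i j : 1
  rw [sub_mul, one_mul, smul_mul, sub_apply, smul_apply, map_C_mul_geomSeries_apply, smul_eq_mul]
  ext (_ | k)
  · simp [geomSeries, one_apply, apply_ite (coeff 0)]
  · simp [geomSeries, coeff_succ_X_mul, one_apply, apply_ite (coeff (k + 1))]

theorem trace_map_C_mul_geomSeries (M : Matrix ι ι R) :
    (M.map C * geomSeries M).trace = mk fun k => (M ^ (k + 1)).trace := by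
  ext k
  simp [trace, map_C_mul_geomSeries_apply]

theorem coe_charpoly_reverse (M : Matrix ι ι R) :
    (M.charpoly.reverse : R⟦X⟧) = (1 - (X : R⟦X⟧) • M.map C).det := by
  rw [reverse_charpoly, charpolyRev, ← Polynomial.coeToPowerSeries.ringHom_apply, RingHom.map_det]
  congr 1
  ext i j
  simp [one_apply, apply_ite, (commute_X _).eq]

theorem derivative_det_one_sub_X_smul (M : Matrix ι ι R) :
    d⁄dX R (1 - (X : R⟦X⟧) • M.map C).det =
      -((1 - (X : R⟦X⟧) • M.map C).det * (M.map C * geomSeries M).trace) := by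
  set B := 1 - (X : R⟦X⟧) • M.map C
  have hadj : B.adjugate = B.det • geomSeries M := by
    calc B.adjugate = B.adjugate * (B * geomSeries M) := by
          rw [one_sub_X_smul_mul_geomSeries, mul_one]
      _ = B.det • geomSeries M := by rw [← Matrix.mul_assoc, adjugate_mul, smul_one_mul]
  have hmap : B.map (d⁄dX R) = -M.map C := by
    ext i j
    simp [B, one_apply, apply_ite]
  rw [Derivation.map_det, hadj, hmap, mul_neg, trace_neg, smul_mul, trace_smul, smul_eq_mul,
    trace_mul_comm]

end Matrix

theorem psExp_logSeries_trace_pow_mul_charpoly_reverse {F ι : Type*} [Field F] [CharZero F]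
    [Fintype ι] [DecidableEq ι] (M : Matrix ι ι F) :
    psExp (logSeries fun k => (M ^ k).trace) * (M.charpoly.reverse : F⟦X⟧) = 1 := by
  refine psExp_mul_eq_one_of_derivative (constantCoeff_logSeries _) ?_ ?_
  · rw [← coeff_zero_eq_constantCoeff_apply, Polynomial.coeff_coe, Polynomial.coeff_zero_reverse,
      M.charpoly_monic.leadingCoeff]
  · rw [Matrix.coe_charpoly_reverse, Matrix.derivative_det_one_sub_X_smul, derivative_logSeries,
      Matrix.trace_map_C_mul_geomSeries]

theorem stmt_14_general (K Ω : Type*) [Field K] [CharZero K] [Field Ω] [Algebra K Ω]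
    (A : Type*) [Ring A] [Algebra K A]
    (r : ℕ)
    (n : Fin r → ℕ) (ρ : ∀ i, A →ₗ[K] Matrix (Fin (n i)) (Fin (n i)) Ω)
    (hρmul : ∀ i (x y : A), ρ i (x * y) = ρ i x * ρ i y)
    (μ : Fin r → ℤ)
    (t : A →ₗ[K] K)
    (hμ : ∀ f : A, algebraMap K Ω (t f) = ∑ i, (μ i : Ω) * Matrix.trace (ρ i f))
    (f : A) :
    PowerSeries.map (algebraMap K Ω)
        (psExp (PowerSeries.mk fun k => if k = 0 then 0 else t (f ^ k) / (k : K)))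
      * ∏ i, (↑(Matrix.charpoly (ρ i f)).reverse : PowerSeries Ω) ^ (μ i).toNat
    = ∏ i, (↑(Matrix.charpoly (ρ i f)).reverse : PowerSeries Ω) ^ (-(μ i)).toNat := by
  have : CharZero Ω := charZero_of_injective_algebraMap (algebraMap K Ω).injective
  -- `ρ i` need not be unital, so only positive powers are multiplicative.
  have hpow : ∀ i k, ρ i (f ^ (k + 1)) = ρ i f ^ (k + 1) := fun i k => by
    induction k with
    | zero => simp
    | succ k ih => rw [pow_succ f, hρmul, ih, ← pow_succ]
  have hlog : map (algebraMap K Ω) (logSeries fun k => t (f ^ k)) =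
      ∑ i, (μ i : Ω) • logSeries fun k => (ρ i f ^ k).trace := by
    rw [map_logSeries, ← logSeries_sum_mul]
    ext (_ | k)
    · simp [logSeries]
    · simp [logSeries, hμ, hpow]
  change map _ (psExp (logSeries fun k => t (f ^ k))) * _ = _
  rw [map_psExp, hlog, psExp_sum _ fun i _ => by simp [constantCoeff_logSeries],
    ← Finset.prod_mul_distrib]
  exact Finset.prod_congr rfl fun i _ => psExp_intCast_smul_mul_pow (constantCoeff_logSeries _)
    (psExp_logSeries_trace_pow_mul_charpoly_reverse (ρ i f)) (μ i)

/-- (Theorem 3 a) of the paper).  Let `K` be a field of characteristic 0,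
`A` a finite-dimensional semisimple `K`-algebra with simple factors cut out by central
orthogonal idempotents `e₁, …, e_r` summing to 1, and `t : A → K` a `K`-linear tracial
functional whose multiplicity on the `i`-th factor is a rational integer `μᵢ`: concretely,
the reduced trace of each factor `Aᵢ = eᵢAeᵢ` is realized by a corner representation
`ρᵢ : A → M_{nᵢ}(Ω)` (with `ρᵢ(eᵢ) = 1`, `ρᵢ x = ρᵢ(eᵢ x eᵢ)`, `ρᵢ` multiplicative),
and `t f = ∑ᵢ μᵢ · Trd_{Aᵢ}(eᵢ f) = ∑ᵢ μᵢ · tr (ρᵢ f)`.  Then for any `f ∈ A`,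
`exp (∑_{n≥1} t(fⁿ) tⁿ/n) = ∏ᵢ Nrd_{Aᵢ}(eᵢ − eᵢ f t)^{−μᵢ}`, where
`Nrd_{Aᵢ}(eᵢ − eᵢ f t)` is the reverse characteristic polynomial of `ρᵢ f`, i.e. the
identity `Z · ∏ᵢ Pᵢ^{μᵢ⁺} = ∏ᵢ Pᵢ^{μᵢ⁻}` holds (so `Z` lies in `K(t)`). -/
theorem stmt_14 (K Ω : Type*) [Field K] [CharZero K] [Field Ω] [Algebra K Ω]
    (A : Type*) [Ring A] [Algebra K A] [FiniteDimensional K A] [IsSemisimpleRing A]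
    (r : ℕ) (e : Fin r → A)
    (hcentral : ∀ i, e i ∈ Set.center A)
    (hidem : ∀ i, IsIdempotentElem (e i))
    (horth : ∀ i j, i ≠ j → e i * e j = 0)
    (hsum : ∑ i, e i = 1)
    (n : Fin r → ℕ) (ρ : ∀ i, A →ₗ[K] Matrix (Fin (n i)) (Fin (n i)) Ω)
    (hρmul : ∀ i (x y : A), ρ i (x * y) = ρ i x * ρ i y)
    (hρe : ∀ i, ρ i (e i) = 1)
    (hρcorner : ∀ i (x : A), ρ i x = ρ i (e i * x * e i))
    (μ : Fin r → ℤ)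
    (t : A →ₗ[K] K) (htracial : ∀ f g : A, t (f * g) = t (g * f))
    (hμ : ∀ f : A, algebraMap K Ω (t f) = ∑ i, (μ i : Ω) * Matrix.trace (ρ i f))
    (f : A) :
    PowerSeries.map (algebraMap K Ω)
        (psExp (PowerSeries.mk fun k => if k = 0 then 0 else t (f ^ k) / (k : K)))
      * ∏ i, (↑(Matrix.charpoly (ρ i f)).reverse : PowerSeries Ω) ^ (μ i).toNat
    = ∏ i, (↑(Matrix.charpoly (ρ i f)).reverse : PowerSeries Ω) ^ (-(μ i)).toNat :=
  stmt_14_general K Ω A r n ρ hρmul μ t hμ f
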